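/- arXiv:1308.2647 — 4 statements merged into one kernel-verified Lean document; each statement's English description precedes it below -/
import Mathlib

section
/- Let K be a differential field with field of constants C. For a homogeneous linear differential equation aₙu⁽ⁿ⁾ + ... + a₁u' + a₀u = 0 with coefficients in K and aₙ ≠ 0, the set of solutions u ∈ K is a C-vector space of dimension at most n. -/
/-- A differential field: a field equipped with a derivation. -/
structure DiffField (K : Type*) [Field K] where
  d : K → K
  d_add : ∀ a b : K, d (a + b) = d a + d b
  d_mul : ∀ a b : K, d (a * b) = d a * b + a * d b

namespace DiffField

variable {K : Type*} [Field K] (dk : DiffField K)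

theorem d_zero : dk.d 0 = 0 := by
  have h := dk.d_add 0 0
  rw [add_zero] at h
  exact (left_eq_add.mp h)

theorem d_one : dk.d 1 = 0 := by
  have h := dk.d_mul 1 1
  simp only [mul_one, one_mul] at h
  exact (left_eq_add.mp h)

/-- The subfield of constants of a differential field. -/
def constants : Subfield K where
  carrier := {x | dk.d x = 0}
  zero_mem' := dk.d_zero
  one_mem' := dk.d_one
  add_mem' := by
    intro a b ha hb
    simp only [Set.mem_setOf_eq] at *
    rw [dk.d_add, ha, hb, add_zero]
  neg_mem' := by
    intro a ha
    simp only [Set.mem_setOf_eq] at *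
    have h := dk.d_add a (-a)
    rw [add_neg_cancel, dk.d_zero, ha, zero_add] at h
    exact h.symm
  mul_mem' := by
    intro a b ha hb
    simp only [Set.mem_setOf_eq] at *
    rw [dk.d_mul, ha, hb, zero_mul, mul_zero, add_zero]
  inv_mem' := by
    intro a ha
    simp only [Set.mem_setOf_eq] at *
    by_cases h : a = 0
    · rw [h, inv_zero]; exact dk.d_zero
    · have hm := dk.d_mul a a⁻¹
      rw [mul_inv_cancel₀ h, dk.d_one, ha, zero_mul, zero_add] at hm
      exact (mul_eq_zero.mp hm.symm).resolve_left h

end DiffField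

/-!
If `u₁, …, u_m` are `C`-linearly independent solutions, their Wronskian columns
`(u_j, u_j', …, u_j⁽ⁿ⁻¹⁾)` are `K`-linearly independent in `Kⁿ`, so `m ≤ n`. Since the equation
expresses `u⁽ⁿ⁾` through lower derivatives, differentiating the coefficients of a `K`-linear
relation among the columns gives another one. A nonzero relation of minimal support, scaled to
have a coefficient `1`, therefore has constant coefficients, and its first row is a `C`-linear
relation among the `u_j`.
-/

namespace DiffField

variable {K : Type*} [Field K] (dk : DiffField K)

def dLinear : K →ₗ[dk.constants] K where
  toFun := dk.d
  map_add' := dk.d_add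
  map_smul' c u := by
    have hc : dk.d c = 0 := c.2
    simp only [RingHom.id_apply, Subfield.smul_def, smul_eq_mul, dk.d_mul, hc, zero_mul, zero_add]

theorem d_sum {ι : Type*} (s : Finset ι) (f : ι → K) :
    dk.d (∑ j ∈ s, f j) = ∑ j ∈ s, dk.d (f j) :=
  map_sum dk.dLinear f s

theorem dLinear_pow_apply (i : ℕ) (u : K) : (dk.dLinear ^ i) u = dk.d^[i] u :=
  Module.End.pow_apply _ i u

def linearDiffOperator (n : ℕ) (a : ℕ → K) : K →ₗ[dk.constants] K :=
  ∑ i ∈ Finset.range (n + 1), a i • dk.dLinear ^ i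

theorem linearDiffOperator_apply (n : ℕ) (a : ℕ → K) (u : K) :
    dk.linearDiffOperator n a u = ∑ i ∈ Finset.range (n + 1), a i * dk.d^[i] u := by
  simp only [linearDiffOperator, LinearMap.sum_apply, LinearMap.smul_apply,
    dLinear_pow_apply, smul_eq_mul]

theorem exists_ne_zero_forall_d_eq_zero {ι : Type*} [Fintype ι] (W : Submodule K (ι → K))
    (hW : ∀ b ∈ W, dk.d ∘ b ∈ W) {b : ι → K} (hb : b ∈ W) (hb0 : b ≠ 0) :
    ∃ c ∈ W, c ≠ 0 ∧ ∀ j, dk.d (c j) = 0 := by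
  classical
  induction hk : (Finset.univ.filter fun j => b j ≠ 0).card using Nat.strong_induction_on
    generalizing b with
  | _ k ih =>
  obtain ⟨j₀, hj₀⟩ := Function.ne_iff.mp hb0
  set c := (b j₀)⁻¹ • b with hc_def
  have hc : c ∈ W := W.smul_mem _ hb
  have hcj₀ : c j₀ = 1 := inv_mul_cancel₀ hj₀
  by_cases hdc : dk.d ∘ c = 0
  · exact ⟨c, hc, fun h => one_ne_zero (hcj₀.symm.trans (congrFun h j₀)), congrFun hdc⟩
  -- normalising `c j₀ = 1` makes `d ∘ c` vanish at `j₀` as well as off the support of `b`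
  have hsupp : (Finset.univ.filter fun j => (dk.d ∘ c) j ≠ 0) ⊆
      (Finset.univ.filter fun j => b j ≠ 0).erase j₀ := by
    intro j hj
    simp only [Finset.mem_filter, Finset.mem_univ, true_and, Finset.mem_erase,
      Function.comp_apply] at hj ⊢
    refine ⟨fun hj₀' => hj (by rw [hj₀', hcj₀, dk.d_one]), fun hbj => hj ?_⟩
    rw [hc_def, Pi.smul_apply, hbj, smul_zero, dk.d_zero]
  refine ih _ ?_ (hW c hc) hdc rfl
  calc _ ≤ _ := Finset.card_le_card hsupp
    _ < k := hk ▸ Finset.card_erase_lt_of_mem (by simpa using hj₀)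

section Wronskian

variable {ι : Type*} [Fintype ι]

def wronskianRelations (n : ℕ) (u : ι → K) : Submodule K (ι → K) :=
  LinearMap.ker (Fintype.linearCombination K fun j (i : Fin n) => dk.d^[i] (u j))

theorem mem_wronskianRelations {n : ℕ} {u : ι → K} {b : ι → K} :
    b ∈ dk.wronskianRelations n u ↔ ∀ i < n, ∑ j, b j * dk.d^[i] (u j) = 0 := by
  simp [wronskianRelations, Fintype.linearCombination_apply, funext_iff, Finset.sum_apply,
    Fin.forall_iff]

variable {n : ℕ} {a : ℕ → K} {u : ι → K}

theorem sum_mul_iterate_d_eq_zero_of_le (han : a n ≠ 0)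
    (hu : ∀ j, dk.linearDiffOperator n a (u j) = 0) {b : ι → K}
    (hb : ∀ i < n, ∑ j, b j * dk.d^[i] (u j) = 0) {k : ℕ} (hk : k ≤ n) :
    ∑ j, b j * dk.d^[k] (u j) = 0 := by
  obtain hk | rfl := hk.lt_or_eq
  · exact hb k hk
  have hcomb : ∑ i ∈ Finset.range (k + 1), a i * ∑ j, b j * dk.d^[i] (u j) = 0 := by
    calc _ = ∑ j, b j * dk.linearDiffOperator k a (u j) := by
          simp only [linearDiffOperator_apply, Finset.mul_sum]
          rw [Finset.sum_comm]
          exact Finset.sum_congr rfl fun j _ => Finset.sum_congr rfl fun i _ => by ring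
      _ = 0 := by simp [hu]
  rw [Finset.sum_range_succ, Finset.sum_eq_zero fun i hi => by
    rw [hb i (Finset.mem_range.mp hi), mul_zero], zero_add] at hcomb
  exact (mul_eq_zero.mp hcomb).resolve_left han

theorem d_comp_mem_wronskianRelations (han : a n ≠ 0)
    (hu : ∀ j, dk.linearDiffOperator n a (u j) = 0) {b : ι → K}
    (hb : b ∈ dk.wronskianRelations n u) : dk.d ∘ b ∈ dk.wronskianRelations n u := by
  rw [mem_wronskianRelations] at hb ⊢
  intro i hi
  have hleibniz : dk.d (∑ j, b j * dk.d^[i] (u j)) =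
      ∑ j, dk.d (b j) * dk.d^[i] (u j) + ∑ j, b j * dk.d^[i + 1] (u j) := by
    rw [d_sum, ← Finset.sum_add_distrib]
    exact Finset.sum_congr rfl fun j _ => by rw [d_mul, Function.iterate_succ_apply']
  rw [hb i hi, d_zero, dk.sum_mul_iterate_d_eq_zero_of_le han hu hb hi, add_zero] at hleibniz
  exact hleibniz.symm

theorem linearIndependent_wronskian (han : a n ≠ 0)
    (hu : ∀ j, dk.linearDiffOperator n a (u j) = 0) (hind : LinearIndependent dk.constants u) :
    LinearIndependent K fun j (i : Fin n) => dk.d^[i] (u j) := by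
  rw [Fintype.linearIndependent_iff]
  intro g hg
  suffices g = 0 from congrFun this
  by_contra hg0
  have hgW : g ∈ dk.wronskianRelations n u :=
    LinearMap.mem_ker.mpr ((Fintype.linearCombination_apply _ _ _).trans hg)
  obtain ⟨c, hcW, hc0, hdc⟩ := dk.exists_ne_zero_forall_d_eq_zero _
    (fun _ => dk.d_comp_mem_wronskianRelations han hu) hgW hg0
  have hrel : ∑ j, c j * u j = 0 := by
    simpa using dk.sum_mul_iterate_d_eq_zero_of_le han hu ((dk.mem_wronskianRelations).mp hcW)
      (Nat.zero_le n)
  have hc := Fintype.linearIndependent_iff.mp hind (fun j => ⟨c j, hdc j⟩) hrel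
  exact hc0 (funext fun j => congrArg Subtype.val (hc j))

theorem card_le_of_linearIndependent (han : a n ≠ 0)
    (hu : ∀ j, dk.linearDiffOperator n a (u j) = 0) (hind : LinearIndependent dk.constants u) :
    Fintype.card ι ≤ n := by
  simpa using (dk.linearIndependent_wronskian han hu hind).fintype_card_le_finrank

end Wronskian

end DiffField

/-- The solution set of a homogeneous linear differential equation
`aₙ u⁽ⁿ⁾ + ⋯ + a₁ u' + a₀ u = 0` of order `n` over a differential field `K`
is a vector space over the field of constants, of dimension at most `n`. -/
theorem solution_space_dim_le {K : Type*} [Field K] (dk : DiffField K)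
    (n : ℕ) (a : ℕ → K) (han : a n ≠ 0) :
    ∃ S : Submodule dk.constants K,
      (∀ u : K, u ∈ S ↔ ∑ i ∈ Finset.range (n + 1), a i * dk.d^[i] u = 0) ∧
      Module.rank dk.constants S ≤ n := by
  refine ⟨LinearMap.ker (dk.linearDiffOperator n a), fun u => ?_, ?_⟩
  · rw [LinearMap.mem_ker, DiffField.linearDiffOperator_apply]
  refine rank_le fun s hs => ?_
  have hsK := hs.map' _ (Submodule.ker_subtype _)
  have h := dk.card_le_of_linearIndependent han (fun x : s => LinearMap.mem_ker.mp x.1.2) hsK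
  rwa [Fintype.card_coe] at h
end

section
/- Over the differential field F(x) of rational functions with derivation d/dx, the operators ∂, ∂ + 1/x, and ∂ + 1/(x+1) are pairwise left coprime, but their right least common multiple is ∂², which has degree 2 < 1 + 1 + 1; hence they are not strongly coprime. In particular, ∂² = (∂ + 1/x)∘(∂ − 1/x) = (∂ + 1/(x+1))∘(∂ − 1/(x+1)). -/
/-- The ring of differential operators `K[∂]`, axiomatized: a ring `R` together with
an embedding `C : K → R` of the coefficient field, a distinguished element `X`
playing the role of `∂` and satisfying `∂ ∘ f = f ∘ ∂ + f'`, such that every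
element of `R` is, in a unique way, a "polynomial" `∑ᵢ C aᵢ * Xⁱ`
(uniqueness being encoded via the coefficient function `coeff`). -/
structure DiffOpRing (K : Type*) [Field K] (dk : DiffField K)
    (R : Type*) [Ring R] where
  C : K →+* R
  X : R
  C_inj : Function.Injective C
  comm : ∀ f : K, X * C f = C f * X + C (dk.d f)
  coeff : R → ℕ → K
  coeff_add : ∀ a b i, coeff (a + b) i = coeff a i + coeff b i
  coeff_fin : ∀ a : R, ∃ n, ∀ m, n ≤ m → coeff a m = 0
  repr_eq : ∀ (a : R) (n : ℕ), (∀ m, n ≤ m → coeff a m = 0) →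
      a = ∑ i ∈ Finset.range n, C (coeff a i) * X ^ i
  coeff_C_mul_X_pow : ∀ (f : K) (i j : ℕ),
      coeff (C f * X ^ i) j = if i = j then f else 0

namespace DiffOpRing

variable {K : Type*} [Field K] {dk : DiffField K} {R : Type*} [Ring R]

/-- The degree (order) of a differential operator; `deg 0 = 0` by convention. -/
noncomputable def deg (dop : DiffOpRing K dk R) (a : R) : ℕ :=
  sSup {n | dop.coeff a n ≠ 0}

/-- `M` is a right least common multiple of `A` and `B`: it generates the
intersection of the principal right ideals generated by `A` and `B`. -/
def IsRightLcm (dop : DiffOpRing K dk R) (M A B : R) : Prop :=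
  ∀ x : R, ((∃ p, x = A * p) ∧ (∃ q, x = B * q)) ↔ ∃ r, x = M * r

/-- `A` and `B` are left coprime: they have no common non-unit left divisor. -/
def LeftCoprime (dop : DiffOpRing K dk R) (A B : R) : Prop :=
  ∀ Q A' B' : R, A = Q * A' → B = Q * B' → IsUnit Q

/-- `A` and `B` are right coprime: they have no common non-unit right divisor. -/
def RightCoprime (dop : DiffOpRing K dk R) (A B : R) : Prop :=
  ∀ A' B' E : R, A = A' * E → B = B' * E → IsUnit E

/-- `Q` is a left greatest common divisor of `A` and `B`. -/
def IsLeftGcd (dop : DiffOpRing K dk R) (Q A B : R) : Prop :=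
  (∃ A', A = Q * A') ∧ (∃ B', B = Q * B') ∧
    ∀ D : R, (∃ A'', A = D * A'') → (∃ B'', B = D * B'') → ∃ E, Q = D * E

end DiffOpRing

section DF
variable {K : Type*} [Field K] (dk : DiffField K)

lemma dfd_zero : dk.d 0 = 0 := by
  have h := dk.d_add 0 0
  rw [add_zero] at h
  exact (left_eq_add.mp h)

lemma dfd_one : dk.d 1 = 0 := by
  have h := dk.d_mul 1 1
  rw [mul_one, one_mul, mul_one] at h
  exact (left_eq_add.mp h)

lemma dfd_inv (u : K) (hu : u ≠ 0) (hdu : dk.d u = 1) :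
    dk.d u⁻¹ + u⁻¹ * u⁻¹ = 0 := by
  have h := dk.d_mul u u⁻¹
  rw [mul_inv_cancel₀ hu, dfd_one, hdu, one_mul] at h
  have h3 : u⁻¹ * u⁻¹ + u⁻¹ * (u * dk.d u⁻¹) = 0 := by
    rw [← mul_add, ← h, mul_zero]
  rw [← mul_assoc, inv_mul_cancel₀ hu, one_mul] at h3
  linear_combination h3

end DF

section Aux
variable {K : Type*} [Field K] {dk : DiffField K} {R : Type*} [Ring R]
  (dop : DiffOpRing K dk R)

lemma coeff0 (j : ℕ) : dop.coeff 0 j = 0 := by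
  have h := dop.coeff_add 0 0 j
  rw [add_zero] at h
  exact (left_eq_add.mp h)

lemma coeff_sum {ι : Type*} (s : Finset ι) (g : ι → R) (j : ℕ) :
    dop.coeff (∑ i ∈ s, g i) j = ∑ i ∈ s, dop.coeff (g i) j := by
  classical
  induction s using Finset.cons_induction with
  | empty => simp [coeff0]
  | cons a s ha ih => rw [Finset.sum_cons, Finset.sum_cons, dop.coeff_add, ih]

lemma coeff_C_mul (f : K) (b : R) (j : ℕ) :
    dop.coeff (dop.C f * b) j = f * dop.coeff b j := by
  obtain ⟨n, hn⟩ := dop.coeff_fin b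
  conv_lhs => rw [dop.repr_eq b n hn]
  rw [Finset.mul_sum]
  have h1 : ∀ i ∈ Finset.range n, dop.C f * (dop.C (dop.coeff b i) * dop.X ^ i)
      = dop.C (f * dop.coeff b i) * dop.X ^ i := fun i _ => by rw [← mul_assoc, ← map_mul]
  rw [Finset.sum_congr rfl h1, coeff_sum]
  simp only [dop.coeff_C_mul_X_pow]
  rw [Finset.sum_ite_eq' (Finset.range n) j (fun i => f * dop.coeff b i)]
  by_cases hj : j ∈ Finset.range n
  · rw [if_pos hj]
  · rw [if_neg hj, hn j (Nat.le_of_not_lt (by simpa [Finset.mem_range] using hj)), mul_zero]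

lemma coeff_X_mul (b : R) (j : ℕ) :
    dop.coeff (dop.X * b) (j+1) = dop.coeff b j + dk.d (dop.coeff b (j+1)) := by
  obtain ⟨n, hn⟩ := dop.coeff_fin b
  conv_lhs => rw [dop.repr_eq b n hn]
  rw [Finset.mul_sum]
  have h1 : ∀ i ∈ Finset.range n, dop.X * (dop.C (dop.coeff b i) * dop.X ^ i)
      = dop.C (dop.coeff b i) * dop.X ^ (i+1) + dop.C (dk.d (dop.coeff b i)) * dop.X ^ i := by
    intro i _
    rw [← mul_assoc, dop.comm, add_mul, mul_assoc, ← pow_succ']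
  rw [Finset.sum_congr rfl h1, coeff_sum]
  simp only [dop.coeff_add, dop.coeff_C_mul_X_pow]
  rw [Finset.sum_add_distrib]
  have e1 : (∑ i ∈ Finset.range n, if i + 1 = j + 1 then dop.coeff b i else 0)
      = dop.coeff b j := by
    simp only [add_left_inj]
    rw [Finset.sum_ite_eq' (Finset.range n) j (fun i => dop.coeff b i)]
    by_cases hj : j ∈ Finset.range n
    · rw [if_pos hj]
    · rw [if_neg hj, hn j (Nat.le_of_not_lt (by simpa [Finset.mem_range] using hj))]
  have e2 : (∑ i ∈ Finset.range n, if i = j + 1 then dk.d (dop.coeff b i) else 0)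
      = dk.d (dop.coeff b (j+1)) := by
    rw [Finset.sum_ite_eq' (Finset.range n) (j+1) (fun i => dk.d (dop.coeff b i))]
    by_cases hj : j + 1 ∈ Finset.range n
    · rw [if_pos hj]
    · rw [if_neg hj, hn (j+1) (Nat.le_of_not_lt (by simpa [Finset.mem_range] using hj)),
        dfd_zero]
  rw [e1, e2]

lemma pow_mul_coeff (b : R) (m : ℕ) (hb : ∀ k, m + 1 ≤ k → dop.coeff b k = 0) (i : ℕ) :
    (∀ k, i + m + 1 ≤ k → dop.coeff (dop.X ^ i * b) k = 0) ∧
      dop.coeff (dop.X ^ i * b) (i + m) = dop.coeff b m := by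
  induction i with
  | zero =>
    simp only [pow_zero, one_mul, zero_add]
    exact ⟨hb, trivial⟩
  | succ i ih =>
    obtain ⟨ih1, ih2⟩ := ih
    have hx : dop.X ^ (i+1) * b = dop.X * (dop.X ^ i * b) := by rw [pow_succ', mul_assoc]
    constructor
    · intro k hk
      obtain ⟨j, rfl⟩ : ∃ j, k = j + 1 := ⟨k - 1, by omega⟩
      rw [hx, coeff_X_mul, ih1 j (by omega), ih1 (j+1) (by omega), dfd_zero, add_zero]
    · rw [hx, show i + 1 + m = (i + m) + 1 by omega, coeff_X_mul,
        ih1 (i+m+1) (by omega), dfd_zero, add_zero, ih2]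

lemma mul_coeff_top (a b : R) (N M : ℕ)
    (ha : ∀ k, N + 1 ≤ k → dop.coeff a k = 0) (hb : ∀ k, M + 1 ≤ k → dop.coeff b k = 0) :
    (∀ k, N + M + 1 ≤ k → dop.coeff (a * b) k = 0) ∧
      dop.coeff (a * b) (N + M) = dop.coeff a N * dop.coeff b M := by
  have key : ∀ k, dop.coeff (a * b) k
      = ∑ i ∈ Finset.range (N+1), dop.coeff a i * dop.coeff (dop.X ^ i * b) k := by
    intro k
    conv_lhs => rw [dop.repr_eq a (N+1) ha]
    rw [Finset.sum_mul]
    have h1 : ∀ i ∈ Finset.range (N+1), dop.C (dop.coeff a i) * dop.X ^ i * b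
        = dop.C (dop.coeff a i) * (dop.X ^ i * b) := fun i _ => mul_assoc _ _ _
    rw [Finset.sum_congr rfl h1, coeff_sum]
    exact Finset.sum_congr rfl fun i _ => coeff_C_mul dop _ _ _
  constructor
  · intro k hk
    rw [key k]
    apply Finset.sum_eq_zero
    intro i hi
    rw [(pow_mul_coeff dop b M hb i).1 k
      (by simp only [Finset.mem_range] at hi; omega), mul_zero]
  · rw [key (N+M)]
    rw [Finset.sum_eq_single N]
    · rw [(pow_mul_coeff dop b M hb N).2]
    · intro i hi hne
      have hlt : i < N + 1 := Finset.mem_range.mp hi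
      rw [(pow_mul_coeff dop b M hb i).1 (N+M) (by omega), mul_zero]
    · intro h; exact absurd (Finset.self_mem_range_succ N) h

lemma exists_top (a : R) (h : a ≠ 0) :
    ∃ N, dop.coeff a N ≠ 0 ∧ ∀ k, N + 1 ≤ k → dop.coeff a k = 0 := by
  have hne : {n | dop.coeff a n ≠ 0}.Nonempty := by
    by_contra hc
    apply h
    have hz : ∀ m, (0:ℕ) ≤ m → dop.coeff a m = 0 := by
      intro m _
      by_contra h0
      exact hc ⟨m, h0⟩
    rw [dop.repr_eq a 0 hz]
    simp
  obtain ⟨n, hn⟩ := dop.coeff_fin a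
  have hbdd : BddAbove {n | dop.coeff a n ≠ 0} := ⟨n, fun m hm => by
    by_contra hlt
    exact hm (hn m (by omega))⟩
  refine ⟨sSup {n | dop.coeff a n ≠ 0}, Nat.sSup_mem hne hbdd, ?_⟩
  intro k hk
  by_contra h0
  have := le_csSup hbdd (show k ∈ {n | dop.coeff a n ≠ 0} from h0)
  omega

include dop in
lemma Rone_ne_zero : (1 : R) ≠ 0 := by
  intro h
  have hce : dop.C 1 = dop.C 0 := by rw [map_one, map_zero, h]
  exact one_ne_zero (dop.C_inj hce)

lemma coeff_one (j : ℕ) : dop.coeff (1 : R) j = if 0 = j then 1 else 0 := by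
  have h := dop.coeff_C_mul_X_pow 1 0 j
  simpa using h

include dop in
lemma isUnit_of_right_inv (Q v : R) (h : Q * v = 1) : IsUnit Q := by
  have h1 : (1 : R) ≠ 0 := Rone_ne_zero dop
  have hQ : Q ≠ 0 := by rintro rfl; rw [zero_mul] at h; exact h1 h.symm
  have hv : v ≠ 0 := by rintro rfl; rw [mul_zero] at h; exact h1 h.symm
  obtain ⟨N, hN, hNa⟩ := exists_top dop Q hQ
  obtain ⟨M, hM, hMa⟩ := exists_top dop v hv
  have htop := (mul_coeff_top dop Q v N M hNa hMa).2
  rw [h, coeff_one] at htop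
  have hNM : N + M = 0 := by
    by_contra hne
    rw [if_neg (by omega)] at htop
    rcases mul_eq_zero.mp htop.symm with h' | h'
    · exact hN h'
    · exact hM h'
  have hN0 : N = 0 := by omega
  subst hN0
  have hQr := dop.repr_eq Q 1 (fun m hm => hNa m hm)
  rw [Finset.sum_range_one, pow_zero, mul_one] at hQr
  set q := dop.coeff Q 0 with hqdef
  refine ⟨⟨Q, dop.C q⁻¹, ?_, ?_⟩, rfl⟩
  · rw [hQr, ← map_mul, mul_inv_cancel₀ hN, map_one]
  · rw [hQr, ← map_mul, inv_mul_cancel₀ hN, map_one]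

lemma isUnit_of_Cdiff (Q A' B' : R) (c : K) (hc : c ≠ 0)
    (h : Q * B' - Q * A' = dop.C c) : IsUnit Q := by
  apply isUnit_of_right_inv dop Q ((B' - A') * dop.C c⁻¹)
  rw [← mul_assoc, mul_sub, h, ← map_mul, mul_inv_cancel₀ hc, map_one]

lemma factor (f : K) (hf : dk.d f + f * f = 0) :
    dop.X ^ 2 = (dop.X + dop.C f) * (dop.X - dop.C f) := by
  have e1 : (dop.X + dop.C f) * (dop.X - dop.C f)
      = dop.X * dop.X - (dop.X * dop.C f) + (dop.C f * dop.X - dop.C f * dop.C f) := by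
    noncomm_ring
  rw [e1, dop.comm, ← map_mul]
  have e2 : dop.X * dop.X - (dop.C f * dop.X + dop.C (dk.d f))
        + (dop.C f * dop.X - dop.C (f * f))
      = dop.X * dop.X - (dop.C (dk.d f) + dop.C (f * f)) := by noncomm_ring
  rw [e2, ← map_add, hf, map_zero, sub_zero]
  exact pow_two _

lemma lcm_forward (g : K) (hg : g ≠ 0) (hd : dk.d g = 1) (y p q : R)
    (hp : y = dop.X * p) (hq : y = (dop.X + dop.C g⁻¹) * q) :
    y = dop.X ^ 2 * (dop.C g * (p - q)) := by
  set u := p - q with hu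
  have h1 : dop.C g⁻¹ * q = dop.X * u := by
    rw [hu, mul_sub, ← hp, hq]; noncomm_ring
  have h2 : q = dop.C g * (dop.X * u) := by
    rw [← h1, ← mul_assoc, ← map_mul, mul_inv_cancel₀ hg, map_one, one_mul]
  have hXC : dop.X * dop.C g = dop.C g * dop.X + 1 := by
    rw [dop.comm, hd, map_one]
  have hX2C : dop.X ^ 2 * dop.C g = dop.C g * dop.X ^ 2 + (dop.X + dop.X) := by
    rw [pow_two, mul_assoc, hXC, mul_add, mul_one, ← mul_assoc, hXC]
    noncomm_ring
  calc y = dop.X * u + dop.X * q := by rw [hp, hu]; noncomm_ring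
    _ = dop.X * u + (dop.X * dop.C g) * (dop.X * u) := by rw [h2, ← mul_assoc]
    _ = dop.X * u + (dop.C g * dop.X + 1) * (dop.X * u) := by rw [hXC]
    _ = (dop.C g * dop.X ^ 2 + (dop.X + dop.X)) * u := by noncomm_ring
    _ = (dop.X ^ 2 * dop.C g) * u := by rw [hX2C]
    _ = dop.X ^ 2 * (dop.C g * u) := by rw [mul_assoc]

end Aux

/-- Over `F(x)` with derivation `d/dx`, the operators `∂`, `∂ + 1/x` and
`∂ + 1/(x+1)` are pairwise left coprime, their right least common multiple is `∂²`
(with the explicit factorizations `∂² = (∂ + 1/x)(∂ − 1/x) = (∂ + 1/(x+1))(∂ − 1/(x+1))`),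
and `deg ∂² = 2 < 1 + 1 + 1`; hence they are not strongly coprime. -/
theorem pairwise_coprime_not_strongly_coprime {F : Type*} [Field F] [CharZero F]
    (dk : DiffField (RatFunc F))
    (hC : ∀ c : F, dk.d (RatFunc.C c) = 0) (hX : dk.d RatFunc.X = 1)
    {R : Type*} [Ring R] (dop : DiffOpRing (RatFunc F) dk R) :
    let B1 : R := dop.X
    let B2 : R := dop.X + dop.C (RatFunc.X)⁻¹
    let B3 : R := dop.X + dop.C (RatFunc.X + 1)⁻¹
    (dop.X ^ 2 = B2 * (dop.X - dop.C (RatFunc.X)⁻¹) ∧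
     dop.X ^ 2 = B3 * (dop.X - dop.C (RatFunc.X + 1)⁻¹)) ∧
    (dop.LeftCoprime B1 B2 ∧ dop.LeftCoprime B1 B3 ∧ dop.LeftCoprime B2 B3) ∧
    (∀ y : R, ((∃ p, y = B1 * p) ∧ (∃ q, y = B2 * q) ∧ (∃ r, y = B3 * r)) ↔
        ∃ s, y = dop.X ^ 2 * s) ∧
    dop.deg (dop.X ^ 2) = 2 ∧
    dop.deg (dop.X ^ 2) < dop.deg B1 + dop.deg B2 + dop.deg B3 := by
  intro B1 B2 B3
  have hd0 : dk.d 0 = 0 := dfd_zero dk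
  have hx0 : (RatFunc.X : RatFunc F) ≠ 0 := by
    intro h
    exact one_ne_zero (α := RatFunc F) (by rw [← hX, h, hd0])
  have hdx1 : dk.d (RatFunc.X + 1) = 1 := by
    rw [dk.d_add, hX, dfd_one, add_zero]
  have hx10 : (RatFunc.X + 1 : RatFunc F) ≠ 0 := by
    intro h
    exact one_ne_zero (α := RatFunc F) (by rw [← hdx1, h, hd0])
  have hinv0 : (RatFunc.X : RatFunc F)⁻¹ ≠ 0 := inv_ne_zero hx0
  have hinv10 : (RatFunc.X + 1 : RatFunc F)⁻¹ ≠ 0 := inv_ne_zero hx10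
  have hne : (RatFunc.X : RatFunc F)⁻¹ ≠ (RatFunc.X + 1)⁻¹ := by
    intro h
    exact one_ne_zero (left_eq_add.mp (inv_injective h))
  -- factorizations
  have hf1 := dfd_inv dk (RatFunc.X : RatFunc F) hx0 hX
  have hf2 := dfd_inv dk (RatFunc.X + 1 : RatFunc F) hx10 hdx1
  have fact1 : dop.X ^ 2 = B2 * (dop.X - dop.C (RatFunc.X)⁻¹) := factor dop _ hf1
  have fact2 : dop.X ^ 2 = B3 * (dop.X - dop.C (RatFunc.X + 1)⁻¹) := factor dop _ hf2
  -- coprimality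
  have cop12 : dop.LeftCoprime B1 B2 := by
    intro Q A' B' h1 h2
    apply isUnit_of_Cdiff dop Q A' B' (RatFunc.X)⁻¹ hinv0
    rw [← h2, ← h1]
    show dop.X + dop.C (RatFunc.X)⁻¹ - dop.X = dop.C (RatFunc.X)⁻¹
    rw [add_sub_cancel_left]
  have cop13 : dop.LeftCoprime B1 B3 := by
    intro Q A' B' h1 h2
    apply isUnit_of_Cdiff dop Q A' B' (RatFunc.X + 1)⁻¹ hinv10
    rw [← h2, ← h1]
    show dop.X + dop.C (RatFunc.X + 1)⁻¹ - dop.X = dop.C (RatFunc.X + 1)⁻¹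
    rw [add_sub_cancel_left]
  have cop23 : dop.LeftCoprime B2 B3 := by
    intro Q A' B' h1 h2
    apply isUnit_of_Cdiff dop Q A' B' ((RatFunc.X + 1)⁻¹ - (RatFunc.X)⁻¹)
      (sub_ne_zero.mpr (Ne.symm hne))
    rw [← h2, ← h1]
    show dop.X + dop.C (RatFunc.X + 1)⁻¹ - (dop.X + dop.C (RatFunc.X)⁻¹)
        = dop.C ((RatFunc.X + 1)⁻¹ - (RatFunc.X)⁻¹)
    rw [map_sub]
    abel
  -- lcm
  have lcm : ∀ y : R, ((∃ p, y = B1 * p) ∧ (∃ q, y = B2 * q) ∧ (∃ r, y = B3 * r)) ↔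
      ∃ s, y = dop.X ^ 2 * s := by
    intro y
    constructor
    · rintro ⟨⟨p, hp⟩, ⟨q, hq⟩, -⟩
      exact ⟨dop.C RatFunc.X * (p - q), lcm_forward dop RatFunc.X hx0 hX y p q hp hq⟩
    · rintro ⟨s, rfl⟩
      refine ⟨⟨dop.X * s, ?_⟩, ⟨(dop.X - dop.C (RatFunc.X)⁻¹) * s, ?_⟩,
        ⟨(dop.X - dop.C (RatFunc.X + 1)⁻¹) * s, ?_⟩⟩
      · show dop.X ^ 2 * s = dop.X * (dop.X * s)
        rw [pow_two, mul_assoc]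
      · show dop.X ^ 2 * s = B2 * ((dop.X - dop.C (RatFunc.X)⁻¹) * s)
        rw [fact1, mul_assoc]
      · show dop.X ^ 2 * s = B3 * ((dop.X - dop.C (RatFunc.X + 1)⁻¹) * s)
        rw [fact2, mul_assoc]
  -- degrees
  have hcX2 : ∀ n, dop.coeff (dop.X ^ 2) n = if 2 = n then (1 : RatFunc F) else 0 := by
    intro n
    have h := dop.coeff_C_mul_X_pow 1 2 n
    simpa using h
  have hdeg2 : dop.deg (dop.X ^ 2) = 2 := by
    show sSup {n | dop.coeff (dop.X ^ 2) n ≠ 0} = 2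
    have hs : {n | dop.coeff (dop.X ^ 2) n ≠ 0} = {2} := by
      ext n
      simp only [Set.mem_setOf_eq, Set.mem_singleton_iff, hcX2 n]
      constructor
      · intro hne2
        by_contra h2
        rw [if_neg (fun h => h2 h.symm)] at hne2
        exact hne2 rfl
      · rintro rfl
        rw [if_pos rfl]
        exact one_ne_zero
    rw [hs, csSup_singleton]
  have hcX : ∀ n, dop.coeff dop.X n = if 1 = n then (1 : RatFunc F) else 0 := by
    intro n
    have h := dop.coeff_C_mul_X_pow 1 1 n
    simpa using h
  have hdegB1 : dop.deg B1 = 1 := by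
    show sSup {n | dop.coeff dop.X n ≠ 0} = 1
    have hs : {n | dop.coeff dop.X n ≠ 0} = {1} := by
      ext n
      simp only [Set.mem_setOf_eq, Set.mem_singleton_iff, hcX n]
      constructor
      · intro hne2
        by_contra h2
        rw [if_neg (fun h => h2 h.symm)] at hne2
        exact hne2 rfl
      · rintro rfl
        rw [if_pos rfl]
        exact one_ne_zero
    rw [hs, csSup_singleton]
  have degB : ∀ f : RatFunc F, f ≠ 0 → dop.deg (dop.X + dop.C f) = 1 := by
    intro f hf
    have hc : ∀ n, dop.coeff (dop.X + dop.C f) n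
        = (if 1 = n then (1 : RatFunc F) else 0) + (if 0 = n then f else 0) := by
      intro n
      rw [dop.coeff_add, hcX n]
      congr 1
      have h := dop.coeff_C_mul_X_pow f 0 n
      simpa using h
    show sSup {n | dop.coeff (dop.X + dop.C f) n ≠ 0} = 1
    apply IsGreatest.csSup_eq
    constructor
    · show dop.coeff (dop.X + dop.C f) 1 ≠ 0
      rw [hc 1, if_pos rfl, if_neg (by omega), add_zero]
      exact one_ne_zero
    · intro n hn
      by_contra hlt
      push_neg at hlt
      have hz : dop.coeff (dop.X + dop.C f) n = 0 := by
        rw [hc n, if_neg (by omega), if_neg (by omega), add_zero]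
      exact hn hz
  have hdegB2 : dop.deg B2 = 1 := degB _ hinv0
  have hdegB3 : dop.deg B3 = 1 := degB _ hinv10
  refine ⟨⟨fact1, fact2⟩, ⟨cop12, cop13, cop23⟩, lcm, hdeg2, ?_⟩
  rw [hdeg2, hdegB1, hdegB2, hdegB3]
  norm_num
end

section
/- Let K be a differential field of characteristic 0 and let A, B, C, D ∈ K[∂] with B, D nonzero. Write H = A·B^{-1} and K' = C·D^{-1} as elements of the skewfield of fractions K(∂) of K[∂]. Then sdeg(H·K') ≤ sdeg(H) + sdeg(K') and sdeg(H + K') ≤ sdeg(H) + sdeg(K'), where sdeg of a fraction is the minimal degree of a denominator in a right fractional decomposition. -/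
/-- The singular degree of an element `H` of the skewfield of fractions `F` of the
differential operator ring `R` (with embedding `j : R →+* F`): the minimal degree
of a denominator `B` in a right fractional decomposition `H = A * B⁻¹`. -/
noncomputable def sdeg {K : Type*} [Field K] {dk : DiffField K} {R : Type*} [Ring R]
    {F : Type*} [DivisionRing F] (dop : DiffOpRing K dk R) (j : R →+* F) (H : F) : ℕ :=
  sInf {n | ∃ A B : R, B ≠ 0 ∧ dop.deg B = n ∧ H = j A * (j B)⁻¹}

/-!
Writing operators in the right basis `∂ⁱ c`, the `deg P + deg Q + 2` operators `P ∂ⁱ`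
(`i ≤ deg Q`) and `Q ∂ʲ` (`j ≤ deg P`) all lie in the `(deg P + deg Q + 1)`-dimensional right
`K`-space of operators of order at most `deg P + deg Q`. A linear dependence among them is an
equation `P s = Q t` with `deg s ≤ deg Q`, `deg t ≤ deg P` and, when `P ≠ 0`, `t ≠ 0`.
Applied to `B s = C t` it gives `A B⁻¹ · C D⁻¹ = (A s) (D t)⁻¹`, and applied to `D s = B t` it
gives `A B⁻¹ + C D⁻¹ = (A t + C s) (B t)⁻¹`; in both cases the new denominator has degree at most
`deg B + deg D`, because degrees of nonzero operators add.
-/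

namespace DiffOpRing

variable {K : Type*} [Field K] {dk : DiffField K} {R : Type*} [Ring R] (dop : DiffOpRing K dk R)

def coeffAddHom (i : ℕ) : R →+ K :=
  AddMonoidHom.mk' (dop.coeff · i) fun a b => dop.coeff_add a b i

theorem coeff_zero (i : ℕ) : dop.coeff 0 i = 0 :=
  (dop.coeffAddHom i).map_zero

theorem coeff_sub (a b : R) (i : ℕ) : dop.coeff (a - b) i = dop.coeff a i - dop.coeff b i :=
  (dop.coeffAddHom i).map_sub a b

theorem coeff_sum {ι : Type*} (s : Finset ι) (f : ι → R) (i : ℕ) :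
    dop.coeff (∑ x ∈ s, f x) i = ∑ x ∈ s, dop.coeff (f x) i :=
  map_sum (dop.coeffAddHom i) f s

theorem eq_zero_of_forall_coeff_eq_zero {a : R} (h : ∀ i, dop.coeff a i = 0) : a = 0 := by
  rw [dop.repr_eq a 0 fun m _ => h m, Finset.sum_range_zero]

theorem coeff_C (c : K) (k : ℕ) : dop.coeff (dop.C c) k = if k = 0 then c else 0 := by
  simpa [eq_comm] using dop.coeff_C_mul_X_pow c 0 k

theorem coeff_X_pow (i k : ℕ) : dop.coeff (dop.X ^ i) k = if i = k then 1 else 0 := by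
  simpa using dop.coeff_C_mul_X_pow 1 i k

theorem coeff_C_mul (c : K) (a : R) (k : ℕ) : dop.coeff (dop.C c * a) k = c * dop.coeff a k := by
  obtain ⟨n, hn⟩ := dop.coeff_fin a
  conv_lhs => rw [dop.repr_eq a n hn]
  simp only [Finset.mul_sum, ← mul_assoc, ← map_mul, coeff_sum, coeff_C_mul_X_pow]
  by_cases hk : k < n
  · simp [hk]
  · simp [hk, hn k (not_lt.1 hk)]

theorem coeff_X_mul_succ (a : R) (k : ℕ) :
    dop.coeff (dop.X * a) (k + 1) = dop.coeff a k + dk.d (dop.coeff a (k + 1)) := by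
  obtain ⟨n, hn⟩ := dop.coeff_fin a
  have hN : ∀ m, n + k + 2 ≤ m → dop.coeff a m = 0 := fun m hm => hn m (by omega)
  have hXa : dop.X * a = ∑ i ∈ Finset.range (n + k + 2), dop.C (dop.coeff a i) * dop.X ^ (i + 1)
      + ∑ i ∈ Finset.range (n + k + 2), dop.C (dk.d (dop.coeff a i)) * dop.X ^ i := by
    conv_lhs => rw [dop.repr_eq a _ hN]
    rw [Finset.mul_sum, ← Finset.sum_add_distrib]
    refine Finset.sum_congr rfl fun i _ => ?_
    rw [← mul_assoc, dop.comm, add_mul, mul_assoc, ← pow_succ']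
  rw [hXa, coeff_add, coeff_sum, coeff_sum]
  simp only [coeff_C_mul_X_pow, add_left_inj, Finset.sum_ite_eq', Finset.mem_range]
  simp only [show k < n + k + 2 by omega, show k + 1 < n + k + 2 by omega, if_true]

theorem bddAbove_coeff_ne_zero (a : R) : BddAbove {n | dop.coeff a n ≠ 0} := by
  obtain ⟨N, hN⟩ := dop.coeff_fin a
  exact ⟨N, fun k hk => not_lt.1 fun hlt => hk (hN k hlt.le)⟩

theorem le_deg_of_coeff_ne_zero {a : R} {n : ℕ} (h : dop.coeff a n ≠ 0) : n ≤ dop.deg a :=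
  le_csSup (dop.bddAbove_coeff_ne_zero a) h

theorem deg_le_iff_coeff_eq_zero {a : R} {n : ℕ} :
    dop.deg a ≤ n ↔ ∀ k, n < k → dop.coeff a k = 0 :=
  ⟨fun h _ hk => not_not.1 fun hne => (h.trans_lt hk).not_ge (dop.le_deg_of_coeff_ne_zero hne),
    fun h => csSup_le' fun k hk => not_lt.1 fun hlt => hk (h k hlt)⟩

theorem coeff_eq_zero_of_deg_lt {a : R} {k : ℕ} (h : dop.deg a < k) : dop.coeff a k = 0 :=
  dop.deg_le_iff_coeff_eq_zero.1 le_rfl k h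

theorem coeff_deg_ne_zero {a : R} (ha : a ≠ 0) : dop.coeff a (dop.deg a) ≠ 0 := by
  have hne : {n | dop.coeff a n ≠ 0}.Nonempty :=
    not_not.1 fun h =>
      ha (dop.eq_zero_of_forall_coeff_eq_zero fun i => not_not.1 fun hi => h ⟨i, hi⟩)
  exact Nat.sSup_mem hne (dop.bddAbove_coeff_ne_zero a)

theorem deg_C_le (c : K) : dop.deg (dop.C c) ≤ 0 :=
  dop.deg_le_iff_coeff_eq_zero.2 fun k hk => by simp [coeff_C, hk.ne']

theorem deg_X_pow_le (i : ℕ) : dop.deg (dop.X ^ i) ≤ i :=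
  dop.deg_le_iff_coeff_eq_zero.2 fun k hk => by simp [coeff_X_pow, hk.ne]

theorem deg_X_mul_le {a : R} {n : ℕ} (h : dop.deg a ≤ n) : dop.deg (dop.X * a) ≤ n + 1 := by
  refine dop.deg_le_iff_coeff_eq_zero.2 fun k hk => ?_
  obtain ⟨k, rfl⟩ : ∃ k', k = k' + 1 := ⟨k - 1, by omega⟩
  rw [coeff_X_mul_succ, dop.coeff_eq_zero_of_deg_lt (by omega),
    dop.coeff_eq_zero_of_deg_lt (by omega), dk.d_zero, add_zero]

theorem coeff_X_mul_of_deg_le {a : R} {n : ℕ} (h : dop.deg a ≤ n) :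
    dop.coeff (dop.X * a) (n + 1) = dop.coeff a n := by
  rw [coeff_X_mul_succ, dop.coeff_eq_zero_of_deg_lt (k := n + 1) (by omega), dk.d_zero, add_zero]

theorem deg_X_pow_mul_le {b : R} {n : ℕ} (h : dop.deg b ≤ n) (i : ℕ) :
    dop.deg (dop.X ^ i * b) ≤ n + i := by
  induction i with
  | zero => simpa using h
  | succ i ih => rw [pow_succ', mul_assoc, ← add_assoc]; exact dop.deg_X_mul_le ih

theorem coeff_X_pow_mul_of_deg_le {b : R} {n : ℕ} (h : dop.deg b ≤ n) (i : ℕ) :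
    dop.coeff (dop.X ^ i * b) (n + i) = dop.coeff b n := by
  induction i with
  | zero => simp
  | succ i ih =>
    rw [pow_succ', mul_assoc, ← add_assoc,
      dop.coeff_X_mul_of_deg_le (dop.deg_X_pow_mul_le h i), ih]

theorem coeff_mul_of_deg_le {a : R} {m : ℕ} (ha : dop.deg a ≤ m) (b : R) (k : ℕ) :
    dop.coeff (a * b) k
      = ∑ i ∈ Finset.range (m + 1), dop.coeff a i * dop.coeff (dop.X ^ i * b) k := by
  conv_lhs => rw [dop.repr_eq a (m + 1) fun k hk => dop.coeff_eq_zero_of_deg_lt (by omega)]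
  rw [Finset.sum_mul, coeff_sum]
  exact Finset.sum_congr rfl fun i _ => by rw [mul_assoc, coeff_C_mul]

theorem deg_mul_le {a b : R} {m n : ℕ} (ha : dop.deg a ≤ m) (hb : dop.deg b ≤ n) :
    dop.deg (a * b) ≤ m + n := by
  refine dop.deg_le_iff_coeff_eq_zero.2 fun k hk => ?_
  rw [dop.coeff_mul_of_deg_le ha]
  refine Finset.sum_eq_zero fun i hi => ?_
  have hi : i < m + 1 := Finset.mem_range.1 hi
  rw [dop.coeff_eq_zero_of_deg_lt ((dop.deg_X_pow_mul_le hb i).trans_lt (by omega)), mul_zero]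

theorem coeff_mul_add_of_deg_le {a b : R} {m n : ℕ} (ha : dop.deg a ≤ m) (hb : dop.deg b ≤ n) :
    dop.coeff (a * b) (m + n) = dop.coeff a m * dop.coeff b n := by
  rw [dop.coeff_mul_of_deg_le ha, Finset.sum_eq_single_of_mem m (Finset.self_mem_range_succ m)]
  · rw [add_comm, dop.coeff_X_pow_mul_of_deg_le hb]
  · intro i hi hne
    have hi : i < m := lt_of_le_of_ne (Nat.lt_succ_iff.1 (Finset.mem_range.1 hi)) hne
    rw [dop.coeff_eq_zero_of_deg_lt ((dop.deg_X_pow_mul_le hb i).trans_lt (by omega)), mul_zero]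

theorem coeff_mul_deg_add_deg (a b : R) :
    dop.coeff (a * b) (dop.deg a + dop.deg b) = dop.coeff a (dop.deg a) * dop.coeff b (dop.deg b) :=
  dop.coeff_mul_add_of_deg_le le_rfl le_rfl

theorem isDomain (dop : DiffOpRing K dk R) : IsDomain R := by
  have : Nontrivial R := ⟨⟨1, 0, fun h => one_ne_zero (dop.C_inj (by simpa using h))⟩⟩
  have : NoZeroDivisors R := ⟨fun {a b} hab => by
    by_contra! h
    have hlead := dop.coeff_mul_deg_add_deg a b
    rw [hab, coeff_zero] at hlead
    exact mul_ne_zero (dop.coeff_deg_ne_zero h.1) (dop.coeff_deg_ne_zero h.2) hlead.symm⟩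
  exact NoZeroDivisors.to_isDomain R

theorem deg_mul {a b : R} (ha : a ≠ 0) (hb : b ≠ 0) : dop.deg (a * b) = dop.deg a + dop.deg b :=
  (dop.deg_mul_le le_rfl le_rfl).antisymm <| dop.le_deg_of_coeff_ne_zero <| by
    rw [coeff_mul_deg_add_deg]
    exact mul_ne_zero (dop.coeff_deg_ne_zero ha) (dop.coeff_deg_ne_zero hb)

def ofRightCoeffs (N : ℕ) : (Fin N → K) →+ R where
  toFun g := ∑ k : Fin N, dop.X ^ (k : ℕ) * dop.C (g k)
  map_zero' := by simp
  map_add' g h := by simp [mul_add, Finset.sum_add_distrib]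

theorem ofRightCoeffs_apply {N : ℕ} (g : Fin N → K) :
    dop.ofRightCoeffs N g = ∑ k : Fin N, dop.X ^ (k : ℕ) * dop.C (g k) :=
  rfl

theorem ofRightCoeffs_smul {N : ℕ} (c : K) (g : Fin N → K) :
    dop.ofRightCoeffs N (c • g) = dop.ofRightCoeffs N g * dop.C c := by
  simp [ofRightCoeffs_apply, Finset.sum_mul, mul_assoc, mul_comm c]

theorem ofRightCoeffs_succ {N : ℕ} (g : Fin (N + 1) → K) :
    dop.ofRightCoeffs (N + 1) g
      = dop.ofRightCoeffs N (Fin.init g) + dop.X ^ N * dop.C (g (Fin.last N)) :=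
  Fin.sum_univ_castSucc _

theorem coeff_X_pow_mul_C (i : ℕ) (c : K) : dop.coeff (dop.X ^ i * dop.C c) i = c := by
  simpa [coeff_C] using dop.coeff_X_pow_mul_of_deg_le (dop.deg_C_le c) i

theorem coeff_ofRightCoeffs_of_le {N k : ℕ} (g : Fin N → K) (hk : N ≤ k) :
    dop.coeff (dop.ofRightCoeffs N g) k = 0 := by
  rw [ofRightCoeffs_apply, coeff_sum]
  refine Finset.sum_eq_zero fun i _ => dop.coeff_eq_zero_of_deg_lt ?_
  exact (dop.deg_X_pow_mul_le (dop.deg_C_le _) i).trans_lt (by omega)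

theorem deg_ofRightCoeffs_le {N : ℕ} (g : Fin (N + 1) → K) :
    dop.deg (dop.ofRightCoeffs (N + 1) g) ≤ N :=
  dop.deg_le_iff_coeff_eq_zero.2 fun _ hk => dop.coeff_ofRightCoeffs_of_le g hk

theorem coeff_ofRightCoeffs_last {N : ℕ} (g : Fin (N + 1) → K) :
    dop.coeff (dop.ofRightCoeffs (N + 1) g) N = g (Fin.last N) := by
  rw [ofRightCoeffs_succ, coeff_add, dop.coeff_ofRightCoeffs_of_le _ le_rfl, zero_add,
    coeff_X_pow_mul_C]

theorem ofRightCoeffs_injective (N : ℕ) : Function.Injective (dop.ofRightCoeffs N) := by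
  rw [injective_iff_map_eq_zero]
  induction N with
  | zero => exact fun g _ => Subsingleton.elim g 0
  | succ N ih =>
    intro g hg
    have hlast : g (Fin.last N) = 0 := by
      rw [← dop.coeff_ofRightCoeffs_last g, hg, coeff_zero]
    rw [ofRightCoeffs_succ, hlast, map_zero, mul_zero, add_zero] at hg
    funext i
    induction i using Fin.lastCases with
    | last => exact hlast
    | cast i => exact congrFun (ih _ hg) i

theorem exists_ofRightCoeffs_eq {N : ℕ} {a : R} (h : ∀ k, N ≤ k → dop.coeff a k = 0) :
    ∃ g : Fin N → K, dop.ofRightCoeffs N g = a := by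
  induction N generalizing a with
  | zero =>
    exact ⟨0, by rw [map_zero, dop.eq_zero_of_forall_coeff_eq_zero fun k => h k k.zero_le]⟩
  | succ N ih =>
    set c := dop.coeff a N
    have hlow : ∀ k, N ≤ k → dop.coeff (a - dop.X ^ N * dop.C c) k = 0 := by
      intro k hk
      rcases hk.eq_or_lt with rfl | hlt
      · rw [coeff_sub, coeff_X_pow_mul_C, sub_self]
      · rw [coeff_sub, h k hlt, dop.coeff_eq_zero_of_deg_lt
          ((dop.deg_X_pow_mul_le (dop.deg_C_le c) N).trans_lt (by omega)), sub_zero]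
    obtain ⟨g, hg⟩ := ih hlow
    refine ⟨Fin.snoc g c, ?_⟩
    rw [ofRightCoeffs_succ, Fin.init_snoc, Fin.snoc_last, hg, sub_add_cancel]

theorem exists_ne_zero_sum_mul_C_eq_zero {ι : Type*} [Fintype ι] {N : ℕ} (a : ι → R)
    (ha : ∀ x k, N ≤ k → dop.coeff (a x) k = 0) (hN : N < Fintype.card ι) :
    ∃ g : ι → K, g ≠ 0 ∧ ∑ x, a x * dop.C (g x) = 0 := by
  choose f hf using fun x => dop.exists_ofRightCoeffs_eq (ha x)
  obtain ⟨g, hg, x, hx⟩ := (Fintype.not_linearIndependent_iff (R := K) (v := f)).1 fun hli => by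
    have := hli.fintype_card_le_finrank
    rw [Module.finrank_fin_fun] at this
    omega
  refine ⟨g, Function.ne_iff.2 ⟨x, hx⟩, ?_⟩
  have := congrArg (dop.ofRightCoeffs N) hg
  simpa only [map_sum, map_zero, ofRightCoeffs_smul, hf] using this

theorem exists_mul_eq_mul_deg_le {P : R} (hP : P ≠ 0) (Q : R) :
    ∃ s t : R, t ≠ 0 ∧ P * s = Q * t ∧ dop.deg s ≤ dop.deg Q ∧ dop.deg t ≤ dop.deg P := by
  have := dop.isDomain
  set m := dop.deg P
  set n := dop.deg Q
  let a : Fin (n + 1) ⊕ Fin (m + 1) → R :=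
    Sum.elim (fun i => P * dop.X ^ (i : ℕ)) (fun j => Q * dop.X ^ (j : ℕ))
  have ha : ∀ x k, m + n + 1 ≤ k → dop.coeff (a x) k = 0 := by
    rintro (i | j) k hk <;>
      refine dop.coeff_eq_zero_of_deg_lt ((dop.deg_mul_le le_rfl (dop.deg_X_pow_le _)).trans_lt ?_)
    · have := i.isLt; omega
    · have := j.isLt; omega
  obtain ⟨g, hg, hsum⟩ := dop.exists_ne_zero_sum_mul_C_eq_zero a ha <| by
    simp only [Fintype.card_sum, Fintype.card_fin]; omega
  set s := dop.ofRightCoeffs (n + 1) fun i => g (Sum.inl i)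
  set t := dop.ofRightCoeffs (m + 1) fun j => g (Sum.inr j)
  have hst : P * s + Q * t = 0 := by
    rw [Fintype.sum_sum_type] at hsum
    simpa only [s, t, a, ofRightCoeffs_apply, Finset.mul_sum, mul_assoc, Sum.elim_inl,
      Sum.elim_inr] using hsum
  have ht : t ≠ 0 := by
    intro ht
    rw [ht, mul_zero, add_zero] at hst
    have hs : s = 0 := (mul_eq_zero.1 hst).resolve_left hP
    refine hg (funext fun x => ?_)
    rcases x with i | j
    · exact congrFun (dop.ofRightCoeffs_injective _ (hs.trans (map_zero _).symm)) i
    · exact congrFun (dop.ofRightCoeffs_injective _ (ht.trans (map_zero _).symm)) j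
  refine ⟨s, dop.ofRightCoeffs (m + 1) (-fun j => g (Sum.inr j)), ?_, ?_,
    dop.deg_ofRightCoeffs_le _, dop.deg_ofRightCoeffs_le _⟩
  · rwa [map_neg, neg_ne_zero]
  · rw [map_neg, mul_neg]
    exact eq_neg_of_add_eq_zero_left hst

end DiffOpRing

section Fractions

variable {F : Type*} [DivisionRing F]

theorem mul_inv_mul_mul_inv_eq_of_mul_eq_mul {a b c d s t : F} (hb : b ≠ 0) (ht : t ≠ 0)
    (h : b * s = c * t) : a * b⁻¹ * (c * d⁻¹) = a * s * (d * t)⁻¹ := by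
  have hc : b⁻¹ * c = s * t⁻¹ := by
    rw [inv_mul_eq_iff_eq_mul₀ hb, ← mul_assoc, h, mul_inv_cancel_right₀ ht]
  rw [mul_assoc a, ← mul_assoc b⁻¹, hc, mul_inv_rev]
  simp only [mul_assoc]

theorem mul_inv_add_mul_inv_eq_of_mul_eq_mul {a b c d s t : F} (hs : s ≠ 0) (ht : t ≠ 0)
    (h : b * s = d * t) : a * b⁻¹ + c * d⁻¹ = (a * s + c * t) * (b * s)⁻¹ := by
  have hb : b⁻¹ = s * (b * s)⁻¹ := by rw [mul_inv_rev, mul_inv_cancel_left₀ hs]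
  have hd : d⁻¹ = t * (b * s)⁻¹ := by rw [h, mul_inv_rev, mul_inv_cancel_left₀ ht]
  rw [hb, hd, add_mul, mul_assoc, mul_assoc]

end Fractions

section SingularDegree

variable {K : Type*} [Field K] {dk : DiffField K} {R : Type*} [Ring R] {F : Type*} [DivisionRing F]
  (dop : DiffOpRing K dk R) {j : R →+* F}

theorem sdeg_le_deg {H : F} {A B : R} (hB : B ≠ 0) (hH : H = j A * (j B)⁻¹) :
    sdeg dop j H ≤ dop.deg B :=
  Nat.sInf_le ⟨A, B, hB, rfl, hH⟩

theorem exists_deg_eq_sdeg {H : F} (h : ∃ A B : R, B ≠ 0 ∧ H = j A * (j B)⁻¹) :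
    ∃ A B : R, B ≠ 0 ∧ dop.deg B = sdeg dop j H ∧ H = j A * (j B)⁻¹ := by
  obtain ⟨A, B, hB, hH⟩ := h
  exact Nat.sInf_mem (s := {n | ∃ A B : R, B ≠ 0 ∧ dop.deg B = n ∧ H = j A * (j B)⁻¹})
    ⟨_, A, B, hB, rfl, hH⟩

theorem sdeg_mul_le (hj : Function.Injective j) {A B C D : R} (hB : B ≠ 0) (hD : D ≠ 0) :
    sdeg dop j (j A * (j B)⁻¹ * (j C * (j D)⁻¹)) ≤ dop.deg B + dop.deg D := by
  have := dop.isDomain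
  obtain ⟨s, t, ht, hst, -, ht_deg⟩ := dop.exists_mul_eq_mul_deg_le hB C
  have hfrac : j A * (j B)⁻¹ * (j C * (j D)⁻¹) = j (A * s) * (j (D * t))⁻¹ := by
    rw [map_mul, map_mul]
    exact mul_inv_mul_mul_inv_eq_of_mul_eq_mul ((map_ne_zero_iff j hj).2 hB)
      ((map_ne_zero_iff j hj).2 ht) (by rw [← map_mul, ← map_mul, hst])
  calc _ ≤ dop.deg (D * t) := sdeg_le_deg dop (mul_ne_zero hD ht) hfrac
    _ = dop.deg D + dop.deg t := dop.deg_mul hD ht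
    _ ≤ dop.deg B + dop.deg D := by omega

theorem sdeg_add_le (hj : Function.Injective j) {A B C D : R} (hB : B ≠ 0) (hD : D ≠ 0) :
    sdeg dop j (j A * (j B)⁻¹ + j C * (j D)⁻¹) ≤ dop.deg B + dop.deg D := by
  have := dop.isDomain
  obtain ⟨s, t, ht, hst, -, ht_deg⟩ := dop.exists_mul_eq_mul_deg_le hD B
  have hs : s ≠ 0 := by
    rintro rfl
    exact mul_ne_zero hB ht (by rw [← hst, mul_zero])
  have hfrac : j A * (j B)⁻¹ + j C * (j D)⁻¹ = j (A * t + C * s) * (j (B * t))⁻¹ := by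
    rw [map_add, map_mul, map_mul, map_mul]
    exact mul_inv_add_mul_inv_eq_of_mul_eq_mul ((map_ne_zero_iff j hj).2 ht)
      ((map_ne_zero_iff j hj).2 hs) (by rw [← map_mul, ← map_mul, hst])
  calc _ ≤ dop.deg (B * t) := sdeg_le_deg dop (mul_ne_zero hB ht) hfrac
    _ = dop.deg B + dop.deg t := dop.deg_mul hB ht
    _ ≤ dop.deg B + dop.deg D := by omega

end SingularDegree

theorem sdeg_subadditive_general {K : Type*} [Field K] (dk : DiffField K)
    {R : Type*} [Ring R] (dop : DiffOpRing K dk R)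
    {F : Type*} [DivisionRing F] (j : R →+* F) (hj : Function.Injective j)
    (hfrac : ∀ H : F, ∃ A B : R, B ≠ 0 ∧ H = j A * (j B)⁻¹) :
    ∀ H K' : F,
      sdeg dop j (H * K') ≤ sdeg dop j H + sdeg dop j K' ∧
      sdeg dop j (H + K') ≤ sdeg dop j H + sdeg dop j K' := by
  intro H K'
  obtain ⟨A, B, hB, hH, rfl⟩ := exists_deg_eq_sdeg dop (hfrac H)
  obtain ⟨C, D, hD, hK', rfl⟩ := exists_deg_eq_sdeg dop (hfrac K')
  rw [← hH, ← hK']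
  exact ⟨sdeg_mul_le dop hj hB hD, sdeg_add_le dop hj hB hD⟩

/-- Subadditivity of the singular degree: `sdeg (H·K) ≤ sdeg H + sdeg K` and
`sdeg (H + K) ≤ sdeg H + sdeg K` in the skewfield of fractions of `K[∂]`. -/
theorem sdeg_subadditive {K : Type*} [Field K] [CharZero K] (dk : DiffField K)
    {R : Type*} [Ring R] (dop : DiffOpRing K dk R)
    {F : Type*} [DivisionRing F] (j : R →+* F) (hj : Function.Injective j)
    (hfrac : ∀ H : F, ∃ A B : R, B ≠ 0 ∧ H = j A * (j B)⁻¹) :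
    ∀ H K' : F,
      sdeg dop j (H * K') ≤ sdeg dop j H + sdeg dop j K' ∧
      sdeg dop j (H + K') ≤ sdeg dop j H + sdeg dop j K' :=
  sdeg_subadditive_general dk dop j hj hfrac
end

section
/- Let K be a differential field of characteristic 0 and A ∈ K[∂], H ∈ K(∂). Then sdeg(A + H) = sdeg(H), where sdeg is the minimal degree of a right denominator. -/
def denomDegrees {K : Type*} [Field K] {dk : DiffField K} {R : Type*} [Ring R]
    {F : Type*} [DivisionRing F] (dop : DiffOpRing K dk R) (j : R →+* F) (H : F) : Set ℕ :=
  {n | ∃ A B : R, B ≠ 0 ∧ dop.deg B = n ∧ H = j A * (j B)⁻¹}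

section

variable {K : Type*} [Field K] {dk : DiffField K} {R : Type*} [Ring R]
  {F : Type*} [DivisionRing F] {j : R →+* F}

theorem denomDegrees_subset_add (dop : DiffOpRing K dk R) (hj : Function.Injective j)
    (A : R) (H : F) : denomDegrees dop j H ⊆ denomDegrees dop j (j A + H) := by
  rintro n ⟨A', B, hB, hdeg, rfl⟩
  refine ⟨A * B + A', B, hB, hdeg, ?_⟩
  simpa only [map_add, map_mul, div_eq_mul_inv] using
    add_div' (j A') (j A) (j B) ((map_ne_zero_iff j hj).mpr hB)

theorem denomDegrees_add (dop : DiffOpRing K dk R) (hj : Function.Injective j)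
    (A : R) (H : F) : denomDegrees dop j (j A + H) = denomDegrees dop j H := by
  refine (denomDegrees_subset_add dop hj A H).antisymm' ?_
  simpa using denomDegrees_subset_add dop hj (-A) (j A + H)

end

theorem sdeg_add_operator_general {K : Type*} [Field K] (dk : DiffField K)
    {R : Type*} [Ring R] (dop : DiffOpRing K dk R)
    {F : Type*} [DivisionRing F] (j : R →+* F) (hj : Function.Injective j) :
    ∀ (A : R) (H : F), sdeg dop j (j A + H) = sdeg dop j H :=
  fun A H => congrArg sInf (denomDegrees_add dop hj A H)

/-- Adding a differential operator does not change the singular degree: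
`sdeg (A + H) = sdeg H`. -/
theorem sdeg_add_operator {K : Type*} [Field K] [CharZero K] (dk : DiffField K)
    {R : Type*} [Ring R] (dop : DiffOpRing K dk R)
    {F : Type*} [DivisionRing F] (j : R →+* F) (hj : Function.Injective j)
    (hfrac : ∀ H : F, ∃ A B : R, B ≠ 0 ∧ H = j A * (j B)⁻¹) :
    ∀ (A : R) (H : F), sdeg dop j (j A + H) = sdeg dop j H :=
  sdeg_add_operator_general dk dop j hj
end
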